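/- arXiv:2307.16159 — 5 statements merged into one kernel-verified Lean document; each statement's English description precedes it below -/
import Mathlib

section
/- Let M ∈ ℝ^{A×B} be a matrix of rank r ≥ 1 over finite index sets A and B, and suppose M is (1 - 1/(16r))-monochromatic with color α, i.e., at least (1 - 1/(16r))·|A||B| of its entries equal α. Then M contains a monochromatic rectangle of size at least |A||B|/8, i.e., there exist subsets A' ⊆ A and B' ⊆ B with |A'|·|B'| ≥ |A||B|/8 such that M[a,b] = β for some fixed value β and all (a,b) ∈ A' × B'. -/
open scoped Classical

theorem almost_monochromatic_to_monochromatic {A B : Type*} [Fintype A] [Fintype B]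
    (r : ℕ) (hr : 1 ≤ r) (M : Matrix A B ℝ) (hrank : M.rank = r) (α : ℝ)
    (hmono : ((Finset.univ.filter fun p : A × B => M p.1 p.2 = α).card : ℝ) ≥
      (1 - 1 / (16 * r)) * (Fintype.card A * Fintype.card B)) :
    ∃ (A' : Finset A) (B' : Finset B) (β : ℝ),
      ((A'.card * B'.card : ℝ) ≥ (Fintype.card A * Fintype.card B : ℝ) / 8) ∧
      ∀ a ∈ A', ∀ b ∈ B', M a b = β := by
  classical
  set nA := Fintype.card A with hnA
  set nB := Fintype.card B with hnB
  -- positivity facts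
  have hrpos : (0:ℝ) < r := by exact_mod_cast hr
  have hA1 : 1 ≤ nA := le_trans hr (hrank ▸ M.rank_le_card_height)
  have hB1 : 1 ≤ nB := le_trans hr (hrank ▸ M.rank_le_card_width)
  have hApos : (0:ℝ) < nA := by exact_mod_cast hA1
  have hBpos : (0:ℝ) < nB := by exact_mod_cast hB1
  -- total bad entries
  have hsplit : (Finset.univ.filter fun p : A × B => M p.1 p.2 = α).card
      + (Finset.univ.filter fun p : A × B => ¬ M p.1 p.2 = α).card = nA * nB := by
    rw [Finset.card_filter_add_card_filter_not]
    simp [Finset.card_univ, hnA, hnB]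
  have hbad : ((Finset.univ.filter fun p : A × B => ¬ M p.1 p.2 = α).card : ℝ)
      ≤ (nA * nB) / (16 * r) := by
    have h1 : ((Finset.univ.filter fun p : A × B => M p.1 p.2 = α).card : ℝ)
        + ((Finset.univ.filter fun p : A × B => ¬ M p.1 p.2 = α).card : ℝ)
        = (nA : ℝ) * nB := by exact_mod_cast congrArg (Nat.cast : ℕ → ℝ) hsplit
    have h2 : (1 - 1 / (16 * (r:ℝ))) * (nA * nB)
        = (nA:ℝ) * nB - (nA * nB) / (16 * r) := by ring
    rw [h2] at hmono
    linarith
  -- rows with few bad entries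
  set thr : ℝ := (nB : ℝ) / (8 * r) with hthr
  have hthrpos : 0 < thr := by positivity
  set badRow : A → ℕ := fun a => (Finset.univ.filter fun b => ¬ M a b = α).card with hbadRow
  have hsum : (∑ a : A, badRow a)
      = (Finset.univ.filter fun p : A × B => ¬ M p.1 p.2 = α).card := by
    simp only [hbadRow, Finset.card_filter]
    exact (Fintype.sum_prod_type (f := fun p : A × B => if ¬ M p.1 p.2 = α then (1:ℕ) else 0)).symm
  set Good : Finset A := Finset.univ.filter (fun a => ((badRow a : ℝ) ≤ thr)) with hGood
  set BadR : Finset A := Finset.univ.filter (fun a => ¬ ((badRow a : ℝ) ≤ thr)) with hBadR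
  have hGB : Good.card + BadR.card = nA := by
    rw [hGood, hBadR, Finset.card_filter_add_card_filter_not]
    simp [Finset.card_univ, hnA]
  have hBadRcard : (BadR.card : ℝ) ≤ (nA : ℝ) / 2 := by
    have hle : BadR.card • thr ≤ ∑ a ∈ BadR, (badRow a : ℝ) := by
      refine Finset.card_nsmul_le_sum _ _ _ ?_
      intro a ha
      rw [hBadR, Finset.mem_filter] at ha
      exact le_of_lt (lt_of_not_ge ha.2)
    have hle2 : ∑ a ∈ BadR, (badRow a : ℝ) ≤ ∑ a : A, (badRow a : ℝ) := by
      refine Finset.sum_le_sum_of_subset_of_nonneg (Finset.subset_univ _) ?_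
      intro a _ _; positivity
    have hle3 : (∑ a : A, (badRow a : ℝ)) ≤ (nA * nB) / (16 * r) := by
      rw [← Nat.cast_sum, hsum]; exact hbad
    have hle4 : (BadR.card : ℝ) * thr ≤ (nA * nB) / (16 * r) := by
      calc (BadR.card : ℝ) * thr = BadR.card • thr := by rw [nsmul_eq_mul]
        _ ≤ _ := le_trans hle (le_trans hle2 hle3)
    by_contra hcon
    push_neg at hcon
    have h5 : ((nA:ℝ)/2) * thr < (BadR.card : ℝ) * thr :=
      mul_lt_mul_of_pos_right hcon hthrpos
    have h6 : ((nA:ℝ)/2) * thr = (nA * nB) / (16 * r) := by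
      rw [hthr]; field_simp; ring
    linarith
  have hGoodcard : ((nA : ℝ) / 2) ≤ (Good.card : ℝ) := by
    have : (Good.card : ℝ) + (BadR.card : ℝ) = nA := by exact_mod_cast hGB
    linarith
  have hGoodne : Good.Nonempty := by
    rw [← Finset.card_pos]
    have h0 : (0:ℝ) < (Good.card : ℝ) := lt_of_lt_of_le (by linarith) hGoodcard
    exact_mod_cast h0
  obtain ⟨a₀, ha₀⟩ := hGoodne
  -- the row space
  set W : Submodule ℝ (B → ℝ) := LinearMap.range (Matrix.mulVecLin M.transpose) with hW
  have hWrank : Module.finrank ℝ W = r := by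
    have h1 : M.transpose.rank = Module.finrank ℝ W := rfl
    rw [← h1, Matrix.rank_transpose, hrank]
  have hrowmem : ∀ a : A, M a ∈ W := by
    intro a
    refine ⟨Pi.single a 1, ?_⟩
    ext b
    simp [Matrix.mulVecLin_apply, Matrix.mulVec_single]
  -- differences of good rows
  set S : Set (B → ℝ) := (fun a => M a - M a₀) '' ↑Good with hS
  obtain ⟨t, hts, hspan, hli⟩ := exists_linearIndependent ℝ S
  have htfin : t.Finite := hli.setFinite
  letI : Fintype t := htfin.fintype
  set tF : Finset (B → ℝ) := t.toFinset with htF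
  have hSW : S ⊆ ↑W := by
    rintro v ⟨a, _, rfl⟩
    exact sub_mem (hrowmem a) (hrowmem a₀)
  have htcard : tF.card ≤ r := by
    have h1 : Module.finrank ℝ (Submodule.span ℝ t) = tF.card :=
      finrank_span_set_eq_card hli
    have h2 : Submodule.span ℝ t ≤ W := by
      rw [hspan]
      exact Submodule.span_le.mpr hSW
    have h3 := Submodule.finrank_mono h2
    rw [h1, hWrank] at h3
    exact h3
  -- the union of supports of basis vectors
  set T : Finset B := tF.biUnion (fun u => Finset.univ.filter fun b => u b ≠ 0) with hT
  have hTcard : (T.card : ℝ) ≤ (nB : ℝ) / 4 := by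
    have h1 : T.card ≤ ∑ u ∈ tF, (Finset.univ.filter fun b => u b ≠ 0).card :=
      Finset.card_biUnion_le
    have h2 : ∀ u ∈ tF, ((Finset.univ.filter fun b => u b ≠ 0).card : ℝ) ≤ 2 * thr := by
      intro u hu
      have hu' : u ∈ S := hts (htfin.mem_toFinset.mp hu)
      obtain ⟨a, haG, rfl⟩ := hu'
      have haG' : (badRow a : ℝ) ≤ thr := by
        have h := haG
        rw [Finset.mem_coe, hGood, Finset.mem_filter] at h
        exact h.2
      have ha₀' : (badRow a₀ : ℝ) ≤ thr := by
        have h := ha₀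
        rw [hGood, Finset.mem_filter] at h
        exact h.2
      have hsub : (Finset.univ.filter fun b => (M a - M a₀) b ≠ 0)
          ⊆ (Finset.univ.filter fun b => ¬ M a b = α)
            ∪ (Finset.univ.filter fun b => ¬ M a₀ b = α) := by
        intro b hb
        simp only [Finset.mem_filter, Finset.mem_union, Finset.mem_univ, true_and] at hb ⊢
        by_contra hcon
        push_neg at hcon
        exact hb (by simp [Pi.sub_apply, hcon.1, hcon.2])
      have hcard : (Finset.univ.filter fun b => (M a - M a₀) b ≠ 0).card
          ≤ badRow a + badRow a₀ := by
        calc _ ≤ ((Finset.univ.filter fun b => ¬ M a b = α)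
              ∪ (Finset.univ.filter fun b => ¬ M a₀ b = α)).card := Finset.card_le_card hsub
          _ ≤ _ := Finset.card_union_le _ _
      have := (Nat.cast_le (α := ℝ)).mpr hcard
      push_cast at this
      linarith
    have h3 : (∑ u ∈ tF, ((Finset.univ.filter fun b => u b ≠ 0).card : ℝ))
        ≤ tF.card • (2 * thr) := Finset.sum_le_card_nsmul _ _ _ h2
    have h4 : (T.card : ℝ) ≤ (tF.card : ℝ) * (2 * thr) := by
      rw [nsmul_eq_mul] at h3
      calc (T.card : ℝ) ≤ (∑ u ∈ tF, ((Finset.univ.filter fun b => u b ≠ 0).card : ℝ)) := by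
            rw [← Nat.cast_sum]; exact_mod_cast h1
        _ ≤ _ := h3
    have h5 : (tF.card : ℝ) * (2 * thr) ≤ (r : ℝ) * (2 * thr) := by
      have : (tF.card : ℝ) ≤ (r : ℝ) := by exact_mod_cast htcard
      nlinarith
    have h6 : (r : ℝ) * (2 * thr) = (nB : ℝ) / 4 := by
      rw [hthr]; field_simp; ring
    linarith
  -- the good columns
  set B' : Finset B := Finset.univ.filter (fun b => b ∉ T ∧ M a₀ b = α) with hB'
  have hB'card : (5 / 8 : ℝ) * nB ≤ (B'.card : ℝ) := by
    have hcover : (Finset.univ : Finset B)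
        ⊆ B' ∪ T ∪ (Finset.univ.filter fun b => ¬ M a₀ b = α) := by
      intro b _
      simp only [Finset.mem_union, hB', Finset.mem_filter, Finset.mem_univ, true_and]
      tauto
    have h1 : nB ≤ B'.card + T.card + badRow a₀ := by
      calc nB = (Finset.univ : Finset B).card := by rw [Finset.card_univ]
        _ ≤ (B' ∪ T ∪ (Finset.univ.filter fun b => ¬ M a₀ b = α)).card :=
            Finset.card_le_card hcover
        _ ≤ (B' ∪ T).card + badRow a₀ := Finset.card_union_le _ _
        _ ≤ B'.card + T.card + badRow a₀ := by
            exact Nat.add_le_add_right (Finset.card_union_le _ _) _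
    have h2 : (nB : ℝ) ≤ (B'.card : ℝ) + (T.card : ℝ) + (badRow a₀ : ℝ) := by
      exact_mod_cast h1
    have ha₀' : (badRow a₀ : ℝ) ≤ thr := by
      have h := ha₀
      rw [hGood, Finset.mem_filter] at h
      exact h.2
    have hthrle : thr ≤ (nB : ℝ) / 8 := by
      rw [hthr]
      apply div_le_div_of_nonneg_left (by positivity) (by norm_num)
      have h1r : (1:ℝ) ≤ (r:ℝ) := by exact_mod_cast hr
      linarith
    linarith
  -- monochromaticity
  have hmonorect : ∀ a ∈ Good, ∀ b ∈ B', M a b = α := by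
    intro a ha b hb
    have hbT : b ∉ T ∧ M a₀ b = α := by
      have h := hb
      rw [hB', Finset.mem_filter] at h
      exact h.2
    have hgen : ∀ u ∈ t, u b = 0 := by
      intro u hu
      by_contra hne
      exact hbT.1 (Finset.mem_biUnion.mpr ⟨u, htfin.mem_toFinset.mpr hu,
        Finset.mem_filter.mpr ⟨Finset.mem_univ b, hne⟩⟩)
    have hmem : (M a - M a₀) ∈ Submodule.span ℝ t := by
      rw [hspan]
      exact Submodule.subset_span ⟨a, by exact_mod_cast ha, rfl⟩
    have hzero : (M a - M a₀) b = 0 := by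
      refine Submodule.span_induction (p := fun v _ => v b = 0) ?_ ?_ ?_ ?_ hmem
      · exact fun u hu => hgen u hu
      · rfl
      · intro x y _ _ hx hy
        simp [Pi.add_apply, hx, hy]
      · intro c x _ hx
        simp [Pi.smul_apply, hx]
    have hzero' : M a b - M a₀ b = 0 := hzero
    have heq := sub_eq_zero.mp hzero'
    rw [heq, hbT.2]
  -- conclusion
  refine ⟨Good, B', α, ?_, hmonorect⟩
  have hsize : ((nA : ℝ) / 2) * ((5 / 8 : ℝ) * nB) ≤ (Good.card : ℝ) * (B'.card : ℝ) := by
    have hg0 : (0:ℝ) ≤ (nA : ℝ) / 2 := by positivity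
    have hb0 : (0:ℝ) ≤ (5 / 8 : ℝ) * nB := by positivity
    exact mul_le_mul hGoodcard hB'card hb0 (le_trans hg0 hGoodcard)
  have hprod : (0:ℝ) ≤ (nA:ℝ) * nB := by positivity
  have h516 : ((nA : ℝ) / 2) * ((5 / 8 : ℝ) * nB) = 5 / 16 * ((nA:ℝ) * nB) := by ring
  have hkey : ((nA : ℝ) * nB) / 8 ≤ (Good.card : ℝ) * (B'.card : ℝ) := by
    linarith only [hsize, hprod, h516]
  linarith only [hkey]
end

section
/- Define γ₂(M) for a real matrix M ∈ ℝ^{A×B} as the infimum over all R ≥ 0 such that there exist families of vectors {u_a}_{a∈A}, {v_b}_{b∈B} (in some Euclidean space) with M[a,b] = ⟨u_a, v_b⟩ and ‖u_a‖·‖v_b‖ ≤ R for all a, b. Then γ₂(M) ≤ ‖M‖_∞ · √(rank(M)), where ‖M‖_∞ is the maximum absolute value of an entry of M. -/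
/-!
Write `M = X Y` with `X` of full column rank `r = rank M`; let `x_a` be the rows of `X` and `y_b`
the columns of `Y`, so `M a b = x_a ⬝ y_b`. Among probability vectors `w` on `A`, pick one
maximising `det Σ_w`, where `Σ_w = ∑ₐ w_a x_a x_aᵀ` (a D-optimal design). Moving `w` towards the
vertex `e_a` and applying the matrix determinant lemma shows `x_aᵀ Σ_w⁻¹ x_a ≤ r`
(Kiefer–Wolfowitz), while `y_bᵀ Σ_w y_b = ∑ₐ w_a (M a b)² ≤ ‖M‖_∞²`. Factoring `Σ_w = CᵀC`, the
vectors `u_a = C⁻ᵀ x_a` and `v_b = C y_b` satisfy `⟪u_a, v_b⟫ = M a b`, `‖u_a‖ ≤ √r` and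
`‖v_b‖ ≤ ‖M‖_∞`.
-/

noncomputable def gamma2 {A B : Type*} [Fintype A] [Fintype B] (M : Matrix A B ℝ) : ℝ :=
  sInf {R : ℝ | 0 ≤ R ∧ ∃ (d : ℕ) (u : A → EuclideanSpace ℝ (Fin d))
    (v : B → EuclideanSpace ℝ (Fin d)),
    (∀ a b, M a b = inner ℝ (u a) (v b)) ∧ ∀ a b, ‖u a‖ * ‖v b‖ ≤ R}

open Matrix

theorem Matrix.exists_rank_factorization {K m n : Type*} [Field K] [Fintype n]
    (M : Matrix m n K) :
    ∃ (X : Matrix m (Fin M.rank) K) (Y : Matrix (Fin M.rank) n K),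
      Function.Injective X.mulVec ∧ X * Y = M := by
  classical
  let W := LinearMap.range M.mulVecLin
  let e : Module.Basis (Fin M.rank) K W := Module.finBasisOfFinrankEq K W rfl
  have hcol (j : n) : M.col j ∈ W := ⟨Pi.single j 1, by ext; simp⟩
  refine ⟨Matrix.of fun a i => (e i : m → K) a, Matrix.of fun i j => e.repr ⟨_, hcol j⟩ i,
    ?_, ?_⟩
  · rw [mulVec_injective_iff]
    exact e.linearIndependent.map' W.subtype W.ker_subtype
  · ext a j
    have := congrFun (congrArg Subtype.val (e.sum_repr ⟨_, hcol j⟩)) a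
    simp only [Submodule.coe_sum, Submodule.coe_smul, Finset.sum_apply, Pi.smul_apply,
      smul_eq_mul] at this
    simpa [Matrix.mul_apply, mul_comm] using this

theorem Matrix.det_add_vecMulVec {R n : Type*} [CommRing R] [Fintype n] [DecidableEq n]
    {S : Matrix n n R} (hS : IsUnit S.det) (u v : n → R) :
    (S + vecMulVec u v).det = S.det * (1 + v ⬝ᵥ S⁻¹ *ᵥ u) := by
  rw [vecMulVec_eq Unit, det_add_replicateCol_mul_replicateRow hS, Matrix.mul_assoc,
    ← replicateCol_mulVec, det_unique (n := Unit), add_apply, one_apply_eq,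
    replicateRow_mul_replicateCol_apply]

theorem le_of_forall_one_add_mul_le_one_add_pow {q : ℝ} {n : ℕ}
    (h : ∀ s > 0, 1 + s * q ≤ (1 + s) ^ n) : q ≤ n := by
  have hderiv : HasDerivAt (fun s : ℝ => (1 + s) ^ n) (n : ℝ) 0 := by
    simpa using ((hasDerivAt_id (0 : ℝ)).const_add 1).fun_pow n
  refine ge_of_tendsto hderiv.tendsto_slope_zero_right ?_
  filter_upwards [self_mem_nhdsWithin] with s (hs : 0 < s)
  rw [smul_eq_mul, le_inv_mul_iff₀ hs, zero_add, add_zero, one_pow]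
  linarith [h s hs]

theorem smul_add_single_mem_stdSimplex {ι : Type*} [Fintype ι] [DecidableEq ι] {w : ι → ℝ}
    (hw : w ∈ stdSimplex ℝ ι) {s : ℝ} (hs : 0 ≤ s) (i : ι) :
    (1 + s)⁻¹ • (w + s • Pi.single i 1) ∈ stdSimplex ℝ ι := by
  have h1s : 0 < 1 + s := by linarith
  rw [smul_add, smul_smul]
  refine convex_stdSimplex ℝ ι hw (single_mem_stdSimplex ℝ i) (by positivity) (by positivity) ?_
  field_simp

section Design

variable {ι n : Type*} [Fintype ι]

noncomputable def designMatrix (X : Matrix ι n ℝ) (w : ι → ℝ) : Matrix n n ℝ :=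
  ∑ i, w i • vecMulVec (X i) (X i)

variable (X : Matrix ι n ℝ)

theorem dotProduct_designMatrix_mulVec [Fintype n] (w : ι → ℝ) (y : n → ℝ) :
    y ⬝ᵥ designMatrix X w *ᵥ y = ∑ i, w i * (X i ⬝ᵥ y) ^ 2 := by
  simp only [designMatrix, sum_mulVec, smul_mulVec, vecMulVec_mulVec, op_smul_eq_smul,
    dotProduct_sum, dotProduct_smul, smul_eq_mul]
  exact Finset.sum_congr rfl fun i _ => by rw [dotProduct_comm y]; ring

theorem isHermitian_designMatrix (w : ι → ℝ) : (designMatrix X w).IsHermitian := by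
  simp [designMatrix, IsHermitian, transpose_sum, transpose_smul, transpose_vecMulVec]

theorem posSemidef_designMatrix [Fintype n] {w : ι → ℝ} (hw : 0 ≤ w) :
    (designMatrix X w).PosSemidef := by
  refine .of_dotProduct_mulVec_nonneg (isHermitian_designMatrix X w) fun y => ?_
  rw [star_trivial, dotProduct_designMatrix_mulVec]
  exact Finset.sum_nonneg fun i _ => mul_nonneg (hw i) (sq_nonneg _)

theorem posDef_designMatrix [Fintype n] {w : ι → ℝ} (hw : ∀ i, 0 < w i)
    (hX : Function.Injective X.mulVec) : (designMatrix X w).PosDef := by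
  refine .of_dotProduct_mulVec_pos (isHermitian_designMatrix X w) fun y hy => ?_
  rw [star_trivial, dotProduct_designMatrix_mulVec]
  obtain ⟨i, hi⟩ : ∃ i, X i ⬝ᵥ y ≠ 0 := by
    by_contra! h
    exact hy (hX (by ext i; simpa [mulVec] using h i))
  exact Finset.sum_pos' (fun i _ => mul_nonneg (hw i).le (sq_nonneg _))
    ⟨i, Finset.mem_univ _, mul_pos (hw i) (by positivity)⟩

theorem dotProduct_designMatrix_mulVec_le [Fintype n] {w : ι → ℝ} (hw : w ∈ stdSimplex ℝ ι)
    {y : n → ℝ} {c : ℝ} (hy : ∀ i, |X i ⬝ᵥ y| ≤ c) : y ⬝ᵥ designMatrix X w *ᵥ y ≤ c ^ 2 := by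
  rw [dotProduct_designMatrix_mulVec]
  calc ∑ i, w i * (X i ⬝ᵥ y) ^ 2 ≤ ∑ i, w i * c ^ 2 :=
        Finset.sum_le_sum fun i _ => mul_le_mul_of_nonneg_left
          (sq_abs (X i ⬝ᵥ y) ▸ pow_le_pow_left₀ (abs_nonneg _) (hy i) 2) (hw.1 i)
    _ = c ^ 2 := by rw [← Finset.sum_mul, hw.2, one_mul]

theorem designMatrix_smul_add_single [DecidableEq ι] (w : ι → ℝ) (c s : ℝ) (i : ι) :
    designMatrix X (c • (w + s • Pi.single i 1)) =
      c • (designMatrix X w + s • vecMulVec (X i) (X i)) := by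
  simp [designMatrix, Pi.single_apply, mul_add, add_smul, Finset.sum_add_distrib, Finset.smul_sum,
    smul_smul, ite_smul]

theorem continuous_det_designMatrix [Fintype n] [DecidableEq n] :
    Continuous fun w => (designMatrix X w).det := by
  unfold designMatrix
  fun_prop

theorem dotProduct_inv_designMatrix_mulVec_le_card [Fintype n] [DecidableEq n] {w : ι → ℝ}
    (hw : w ∈ stdSimplex ℝ ι)
    (hmax : IsMaxOn (fun w => (designMatrix X w).det) (stdSimplex ℝ ι) w)
    (hpos : 0 < (designMatrix X w).det) (i : ι) :
    X i ⬝ᵥ (designMatrix X w)⁻¹ *ᵥ X i ≤ Fintype.card n := by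
  classical
  refine le_of_forall_one_add_mul_le_one_add_pow fun s hs => ?_
  have hle : (designMatrix X ((1 + s)⁻¹ • (w + s • Pi.single i 1))).det ≤
      (designMatrix X w).det := hmax (smul_add_single_mem_stdSimplex hw hs.le i)
  rw [designMatrix_smul_add_single, det_smul, ← smul_vecMulVec,
    det_add_vecMulVec hpos.ne'.isUnit, mulVec_smul, dotProduct_smul, smul_eq_mul, inv_pow,
    inv_mul_le_iff₀ (by positivity), mul_comm _ (designMatrix X w).det] at hle
  exact le_of_mul_le_mul_left hle hpos

theorem exists_optimal_design [Fintype n] [DecidableEq n] [Nonempty ι]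
    (hX : Function.Injective X.mulVec) :
    ∃ w ∈ stdSimplex ℝ ι, (designMatrix X w).PosDef ∧
      ∀ i, X i ⬝ᵥ (designMatrix X w)⁻¹ *ᵥ X i ≤ Fintype.card n := by
  let w₀ : ι → ℝ := fun _ => (Fintype.card ι : ℝ)⁻¹
  have hw₀ : w₀ ∈ stdSimplex ℝ ι := ⟨fun _ => by positivity, by simp [w₀]⟩
  obtain ⟨w, hw, hmax⟩ := (isCompact_stdSimplex ℝ ι).exists_isMaxOn ⟨w₀, hw₀⟩
    (continuous_det_designMatrix X).continuousOn
  have hpos : 0 < (designMatrix X w).det :=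
    (posDef_designMatrix X (fun _ => by positivity) hX).det_pos.trans_le (hmax hw₀)
  exact ⟨w, hw, (posSemidef_designMatrix X hw.1).posDef_iff_det_ne_zero.2 hpos.ne',
    dotProduct_inv_designMatrix_mulVec_le_card X hw hmax hpos⟩

end Design

section Gamma2

variable {A B : Type*} [Fintype A] [Fintype B] {M : Matrix A B ℝ}

theorem gamma2_le_of_inner_eq {d : ℕ} (u : A → EuclideanSpace ℝ (Fin d))
    (v : B → EuclideanSpace ℝ (Fin d)) (huv : ∀ a b, M a b = inner ℝ (u a) (v b)) {R : ℝ}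
    (hR : 0 ≤ R) (hle : ∀ a b, ‖u a‖ * ‖v b‖ ≤ R) : gamma2 M ≤ R :=
  csInf_le ⟨0, fun _ h => h.1⟩ ⟨hR, d, u, v, huv, hle⟩

open scoped MatrixOrder in
theorem gamma2_le_of_posDef {d : ℕ} {X : Matrix A (Fin d) ℝ} {Y : Matrix (Fin d) B ℝ}
    (hM : X * Y = M) {S : Matrix (Fin d) (Fin d) ℝ} (hS : S.PosDef) {α β : ℝ}
    (hα : 0 ≤ α) (hβ : 0 ≤ β) (hX : ∀ a, X a ⬝ᵥ S⁻¹ *ᵥ X a ≤ α ^ 2)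
    (hY : ∀ b, Yᵀ b ⬝ᵥ S *ᵥ Yᵀ b ≤ β ^ 2) : gamma2 M ≤ α * β := by
  obtain ⟨C, rfl⟩ := CStarAlgebra.nonneg_iff_eq_star_mul_self.mp hS.posSemidef.nonneg
  have hC : IsUnit C.det := by
    have := (isUnit_iff_isUnit_det _).1 hS.isUnit
    rw [det_mul] at this
    exact isUnit_of_mul_isUnit_right this
  have hCS : star C * C = Cᵀ * C := rfl
  let u a : EuclideanSpace ℝ (Fin d) := WithLp.toLp 2 (X a ᵥ* C⁻¹)
  let v b : EuclideanSpace ℝ (Fin d) := WithLp.toLp 2 (C *ᵥ Yᵀ b)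
  have hu a : ‖u a‖ ^ 2 = X a ⬝ᵥ (star C * C)⁻¹ *ᵥ X a := by
    rw [← real_inner_self_eq_norm_sq, EuclideanSpace.inner_toLp_toLp, star_trivial, hCS,
      Matrix.mul_inv_rev, ← mulVec_mulVec, dotProduct_mulVec, ← transpose_nonsing_inv,
      mulVec_transpose]
  have hv b : ‖v b‖ ^ 2 = Yᵀ b ⬝ᵥ (star C * C) *ᵥ Yᵀ b := by
    rw [← real_inner_self_eq_norm_sq, EuclideanSpace.inner_toLp_toLp, star_trivial, hCS,
      ← mulVec_mulVec]
    conv_rhs => rw [dotProduct_mulVec, vecMul_transpose]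
  refine gamma2_le_of_inner_eq u v (fun a b => ?_) (mul_nonneg hα hβ) fun a b => ?_
  · rw [EuclideanSpace.inner_toLp_toLp, star_trivial, dotProduct_comm, ← dotProduct_mulVec,
      mulVec_mulVec, nonsing_inv_mul _ hC, one_mulVec, ← hM, mul_apply']
    rfl
  · exact mul_le_mul (sq_le_sq₀ (norm_nonneg _) hα |>.1 (hu a ▸ hX a))
      (sq_le_sq₀ (norm_nonneg _) hβ |>.1 (hv b ▸ hY b)) (norm_nonneg _) hα

end Gamma2

theorem gamma2_le_norm_mul_sqrt_rank_general {A B : Type*} [Fintype A] [Fintype B]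
    [Nonempty A] (M : Matrix A B ℝ) :
    gamma2 M ≤ (⨆ a : A, ⨆ b : B, |M a b|) * Real.sqrt M.rank := by
  set c := ⨆ a : A, ⨆ b : B, |M a b|
  have hc₀ : 0 ≤ c := Real.iSup_nonneg fun a => Real.iSup_nonneg fun b => abs_nonneg _
  have hc a b : |M a b| ≤ c :=
    (le_ciSup (Finite.bddAbove_range fun b => |M a b|) b).trans
      (le_ciSup (Finite.bddAbove_range fun a => ⨆ b, |M a b|) a)
  obtain ⟨X, Y, hX, hM⟩ := M.exists_rank_factorization
  obtain ⟨w, hw, hS, hopt⟩ := exists_optimal_design X hX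
  rw [mul_comm]
  refine gamma2_le_of_posDef hM hS (Real.sqrt_nonneg _) hc₀ (fun a => ?_) fun b => ?_
  · simpa [Real.sq_sqrt] using hopt a
  · refine dotProduct_designMatrix_mulVec_le X hw fun a => ?_
    rw [← hM] at hc
    exact hc a b

theorem gamma2_le_norm_mul_sqrt_rank {A B : Type*} [Fintype A] [Fintype B]
    [Nonempty A] [Nonempty B] (M : Matrix A B ℝ) :
    gamma2 M ≤ (⨆ a : A, ⨆ b : B, |M a b|) * Real.sqrt M.rank :=
  gamma2_le_norm_mul_sqrt_rank_general M
end

section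
/- Let r ≥ 2 and Δ ≥ 1 be integers, and define c(j) = h(j/(Δ√r)) where h(α) = (1/2)(1 - arccos(α)/π). Then for every integer j with 1 ≤ j ≤ Δ, we have c(j)/c(j-1) ≥ 1 + 4/(3πΔ√r). -/
/-!
Write `w(α) = (1 - arccos α / π) / 2`. Since `sin` is 1-Lipschitz, `arcsin` (hence `-arccos`)
grows at least linearly on `[-1, 1]`, so `w(j/D) - w((j-1)/D) ≥ 1/(2πD)` with `D = Δ√r`.
For `r ≥ 2` the point `(j-1)/D` lies in `[0, √2/2)`, where `w ∈ [1/4, 3/8]`, and dividing the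
increment by `3/8` gives the factor `1 + 4/(3πD)`.
-/

open Real

namespace Real

theorem sub_le_arcsin_sub_arcsin {a b : ℝ} (ha : -1 ≤ a) (hab : a ≤ b) (hb : b ≤ 1) :
    b - a ≤ arcsin b - arcsin a := by
  have hlip := abs_sin_sub_sin_le (arcsin b) (arcsin a)
  rw [sin_arcsin (ha.trans hab) hb, sin_arcsin ha (hab.trans hb),
    abs_of_nonneg (sub_nonneg.2 hab),
    abs_of_nonneg (sub_nonneg.2 (monotone_arcsin hab))] at hlip
  exact hlip

theorem sub_le_arccos_sub_arccos {a b : ℝ} (ha : -1 ≤ a) (hab : a ≤ b) (hb : b ≤ 1) :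
    b - a ≤ arccos a - arccos b := by
  have := sub_le_arcsin_sub_arcsin ha hab hb
  rw [arccos, arccos]
  linarith

end Real

noncomputable def arccosWeight (α : ℝ) : ℝ := (1 / 2) * (1 - arccos α / π)

theorem sub_div_two_pi_le_arccosWeight_sub {a b : ℝ} (ha : -1 ≤ a) (hab : a ≤ b) (hb : b ≤ 1) :
    (b - a) / (2 * π) ≤ arccosWeight b - arccosWeight a := by
  have hdiff : arccosWeight b - arccosWeight a = (arccos a - arccos b) / (2 * π) := by
    unfold arccosWeight
    field_simp
    ring
  rw [hdiff]
  exact div_le_div_of_nonneg_right (sub_le_arccos_sub_arccos ha hab hb) (by positivity)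

theorem one_div_four_le_arccosWeight {a : ℝ} (ha : 0 ≤ a) : 1 / 4 ≤ arccosWeight a := by
  have : arccos a / π ≤ 1 / 2 := by
    rw [div_le_iff₀ pi_pos]
    linarith [arccos_le_pi_div_two.2 ha]
  unfold arccosWeight
  linarith

theorem arccosWeight_le_three_div_eight {a : ℝ} (ha : a < √2 / 2) : arccosWeight a ≤ 3 / 8 := by
  have : 1 / 4 ≤ arccos a / π := by
    rw [le_div_iff₀ pi_pos]
    linarith [lt_of_not_ge (mt arccos_le_pi_div_four.1 (not_le.2 ha))]
  unfold arccosWeight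
  linarith

theorem one_add_le_arccosWeight_div {a b : ℝ} (ha₀ : 0 ≤ a) (ha : a < √2 / 2) (hab : a ≤ b)
    (hb : b ≤ 1) : 1 + 4 * (b - a) / (3 * π) ≤ arccosWeight b / arccosWeight a := by
  have hlower := one_div_four_le_arccosWeight ha₀
  have hupper := arccosWeight_le_three_div_eight ha
  have hincr := sub_div_two_pi_le_arccosWeight_sub (by linarith) hab hb
  have hstep : 0 ≤ (b - a) / π := div_nonneg (sub_nonneg.2 hab) pi_pos.le
  rw [le_div_iff₀ (by linarith)]
  calc (1 + 4 * (b - a) / (3 * π)) * arccosWeight a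
      = arccosWeight a + 4 / 3 * ((b - a) / π) * arccosWeight a := by ring
    _ ≤ arccosWeight a + 4 / 3 * ((b - a) / π) * (3 / 8) := by gcongr
    _ = arccosWeight a + (b - a) / (2 * π) := by ring
    _ ≤ arccosWeight b := by linarith

theorem c_ratio_lower_bound_general (r Δ : ℕ) (hr : 2 ≤ r)
    (h : ℝ → ℝ) (hdef : ∀ α, h α = (1 / 2) * (1 - Real.arccos α / Real.pi))
    (c : ℕ → ℝ) (hc : ∀ j, c j = h ((j : ℝ) / (Δ * Real.sqrt r)))
    (j : ℕ) (hj1 : 1 ≤ j) (hj2 : j ≤ Δ) :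
    c j / c (j - 1) ≥ 1 + 4 / (3 * Real.pi * Δ * Real.sqrt r) := by
  obtain rfl : h = arccosWeight := funext hdef
  have hj : (1 : ℝ) ≤ j := by exact_mod_cast hj1
  have hjΔ : (j : ℝ) ≤ Δ := by exact_mod_cast hj2
  have hsqrt : √2 ≤ √r := sqrt_le_sqrt (by exact_mod_cast hr)
  have hsqrt_pos : 0 < √r := (sqrt_pos.2 two_pos).trans_le hsqrt
  have hD : (0 : ℝ) < Δ * √r := mul_pos (by linarith) hsqrt_pos
  have hsqrt_two : √2 * √2 = 2 := mul_self_sqrt zero_le_two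
  have hb : (j : ℝ) / (Δ * √r) ≤ √2 / 2 := by
    rw [div_le_div_iff₀ hD two_pos]
    calc (j : ℝ) * 2 ≤ Δ * (√2 * √2) := by rw [hsqrt_two]; linarith
      _ ≤ √2 * (Δ * √r) := by
        nlinarith [mul_le_mul_of_nonneg_left hsqrt (by positivity : (0 : ℝ) ≤ Δ * √2)]
  have hab : ((j : ℝ) - 1) / (Δ * √r) < (j : ℝ) / (Δ * √r) := by gcongr; linarith
  rw [hc, hc, Nat.cast_sub hj1, Nat.cast_one, ge_iff_le]
  convert one_add_le_arccosWeight_div (by positivity) (hab.trans_le hb) hab.le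
    (hb.trans (by nlinarith [sqrt_nonneg 2])) using 2
  field_simp
  ring

theorem c_ratio_lower_bound (r Δ : ℕ) (hr : 2 ≤ r) (hΔ : 1 ≤ Δ)
    (h : ℝ → ℝ) (hdef : ∀ α, h α = (1 / 2) * (1 - Real.arccos α / Real.pi))
    (c : ℕ → ℝ) (hc : ∀ j, c j = h ((j : ℝ) / (Δ * Real.sqrt r)))
    (j : ℕ) (hj1 : 1 ≤ j) (hj2 : j ≤ Δ) :
    c j / c (j - 1) ≥ 1 + 4 / (3 * Real.pi * Δ * Real.sqrt r) :=
  c_ratio_lower_bound_general r Δ hr h hdef c hc j hj1 hj2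
end

section
/- Let r ≥ 2 and Δ ≥ 1 be integers, and define c(j) = h(j/(Δ√r)) where h(α) = (1/2)(1 - arccos(α)/π). Then c(Δ)/c(0) ≤ 1 + 4/(π√r). -/
theorem c_ratio_upper_bound (r Δ : ℕ) (hr : 2 ≤ r) (hΔ : 1 ≤ Δ)
    (h : ℝ → ℝ) (hdef : ∀ α, h α = (1 / 2) * (1 - Real.arccos α / Real.pi))
    (c : ℕ → ℝ) (hc : ∀ j, c j = h ((j : ℝ) / (Δ * Real.sqrt r))) :
    c Δ / c 0 ≤ 1 + 4 / (Real.pi * Real.sqrt r) := by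
  have hπ := Real.pi_pos
  have hΔR : (0:ℝ) < Δ := by exact_mod_cast hΔ
  have hrR : (2:ℝ) ≤ r := by exact_mod_cast hr
  have hs : Real.sqrt 2 ≤ Real.sqrt r := Real.sqrt_le_sqrt hrR
  have hs2 : (1:ℝ) < Real.sqrt 2 := by
    nlinarith [Real.sq_sqrt (by norm_num : (0:ℝ) ≤ 2), Real.sqrt_nonneg 2]
  have hspos : (0:ℝ) < Real.sqrt r := lt_of_lt_of_le (by linarith) hs
  set x : ℝ := 1 / Real.sqrt r with hx
  have hx0 : 0 < x := by positivity
  have hxpi : 2 * x ≤ Real.pi / 2 := by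
    have : x < Real.pi / 4 := by
      rw [hx, div_lt_iff₀ hspos]
      have h43 : (4:ℝ)/3 < Real.sqrt 2 := by
        nlinarith [Real.sq_sqrt (by norm_num : (0:ℝ) ≤ 2), Real.sqrt_nonneg 2]
      nlinarith [Real.pi_gt_three]
    linarith
  have hpile : Real.pi ≤ 4 := by nlinarith [Real.pi_lt_d2]
  have hsin : x ≤ Real.sin (2 * x) := by
    have h1 := Real.mul_le_sin (x := 2 * x) (by linarith) hxpi
    have h2 : x ≤ 2 / Real.pi * (2 * x) := by
      rw [div_mul_eq_mul_div, le_div_iff₀ hπ]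
      nlinarith
    linarith
  have hx1 : x ≤ 1 := by
    rw [hx, div_le_one hspos]; linarith
  have harcsin : Real.arcsin x ≤ 2 * x := by
    rw [Real.arcsin_le_iff_le_sin ⟨by linarith, hx1⟩ ⟨by linarith, hxpi⟩]
    exact hsin
  have hc0 : c 0 = 1 / 4 := by
    rw [hc, hdef]
    norm_num [Real.arccos_zero]
    rw [div_div_cancel_left' (by linarith : Real.pi ≠ 0)]
    norm_num
  have hxeq : (Δ : ℝ) / (Δ * Real.sqrt r) = x := by
    rw [hx]; field_simp
  have hcΔ : c Δ = (1 / 2) * (1 - Real.arccos x / Real.pi) := by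
    rw [hc, hdef, hxeq]
  have h4 : 4 / (Real.pi * Real.sqrt r) = 4 * x / Real.pi := by
    rw [hx]; field_simp
  have hratio : c Δ / c 0 = 1 + 2 * Real.arcsin x / Real.pi := by
    rw [hc0, hcΔ, Real.arccos]
    field_simp
    ring
  rw [hratio, h4]
  have := div_le_div_of_nonneg_right
    (by linarith : 2 * Real.arcsin x ≤ 4 * x) hπ.le
  linarith
end

section
/- Let P = conv{x₁,...,x_v} ⊆ ℝⁿ and Q = {x ∈ ℝⁿ : Ax ≤ b} be polytopes with P ⊆ Q, where A ∈ ℝ^{f×n}. Let S ∈ ℝ^{f×v} be the partial slack matrix S[i,j] = b_i - A_i x_j (which is entrywise nonnegative since P ⊆ Q). If S = UV is a nonnegative factorization with U ∈ ℝ_{≥0}^{f×s} and V ∈ ℝ_{≥0}^{s×v}, define K^lift = {(x,y) ∈ ℝ^{n+s} : Ax + Uy = b, y ≥ 0} and let K be the projection of K^lift onto the first n coordinates. Then P ⊆ K ⊆ Q. -/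
theorem sandwich_polytope (n f v s : ℕ)
    (x : Fin v → (Fin n → ℝ)) (A : Matrix (Fin f) (Fin n) ℝ) (b : Fin f → ℝ)
    (P : Set (Fin n → ℝ)) (hP : P = convexHull ℝ (Set.range x))
    (Q : Set (Fin n → ℝ)) (hQ : Q = {y : Fin n → ℝ | ∀ i, A.mulVec y i ≤ b i})
    (hPQ : P ⊆ Q)
    (U : Matrix (Fin f) (Fin s) ℝ) (V : Matrix (Fin s) (Fin v) ℝ)
    (hU : ∀ i l, 0 ≤ U i l) (hV : ∀ l j, 0 ≤ V l j)
    (hfact : ∀ i j, b i - A.mulVec (x j) i = (U * V) i j)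
    (K : Set (Fin n → ℝ))
    (hK : K = {y : Fin n → ℝ | ∃ w : Fin s → ℝ,
      (∀ i, A.mulVec y i + U.mulVec w i = b i) ∧ ∀ l, 0 ≤ w l}) :
    P ⊆ K ∧ K ⊆ Q := by
  constructor
  · -- P ⊆ K
    rw [hP, hK]
    have hconv : Convex ℝ {y : Fin n → ℝ | ∃ w : Fin s → ℝ,
        (∀ i, A.mulVec y i + U.mulVec w i = b i) ∧ ∀ l, 0 ≤ w l} := by
      rintro y1 ⟨w1, hw1, hw1n⟩ y2 ⟨w2, hw2, hw2n⟩ a c ha hc hac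
      refine ⟨a • w1 + c • w2, fun i => ?_, fun l => ?_⟩
      · simp only [Matrix.mulVec_add, Matrix.mulVec_smul, Pi.add_apply, Pi.smul_apply,
          smul_eq_mul]
        linear_combination a * hw1 i + c * hw2 i + b i * hac
      · simp only [Pi.add_apply, Pi.smul_apply, smul_eq_mul]
        have := hw1n l; have := hw2n l
        positivity
    apply convexHull_min _ hconv
    rintro _ ⟨j, rfl⟩
    refine ⟨fun l => V l j, fun i => ?_, fun l => hV l j⟩
    have h := hfact i j
    have : U.mulVec (fun l => V l j) i = (U * V) i j := by
      simp [Matrix.mulVec, Matrix.mul_apply, dotProduct]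
    linarith
  · -- K ⊆ Q
    rw [hK, hQ]
    rintro y ⟨w, hw, hwn⟩ i
    have hU0 : 0 ≤ U.mulVec w i := by
      unfold Matrix.mulVec dotProduct
      exact Finset.sum_nonneg fun l _ => mul_nonneg (hU i l) (hwn l)
    linarith [hw i]
end
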